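/- Let A be a λ-lattice with a unary operation ' satisfying conditions (D1) and (D2), and let ⊙ and → denote the Sasaki operations on A defined by x ⊙ y := (x ⊔ y') ⊓ y and x → y := x' ⊔ (x ⊓ y). Then the following are equivalent: (i) ⊙ and → form an adjoint pair with respect to the induced order; (ii) A satisfies conditions (E1) and (E2); (iii) A satisfies conditions (F1) and (F2). -/

import Mathlib

/-- A λ-lattice: two commutative binary operations satisfying the weak
associativity laws and the absorption laws. -/
structure LambdaLattice (A : Type*) where
  sup : A → A → A
  inf : A → A → A
  sup_comm : ∀ x y, sup x y = sup y x
  inf_comm : ∀ x y, inf x y = inf y x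
  sup_assoc : ∀ x y z, sup x (sup (sup x y) z) = sup (sup x y) z
  inf_assoc : ∀ x y z, inf x (inf (inf x y) z) = inf (inf x y) z
  absorb_sup : ∀ x y, sup x (inf x y) = x
  absorb_inf : ∀ x y, inf x (sup x y) = x

/-- The induced order of a λ-lattice: `x ≤ y` iff `x ⊔ y = y`. -/
def LambdaLattice.le {A : Type*} (L : LambdaLattice A) (x y : A) : Prop :=
  L.sup x y = y

/-!
Each Sasaki pair `(· ⊙ y, y → ·)` has a unit `x ≤ y → (x ⊙ y)` by (D1) and a counit
`(y → z) ⊙ y ≤ z` by (D2). For a pair of maps on a preorder with unit and counit, being a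
Galois connection is equivalent to both maps being monotone, and also to the weaker
monotonicity conditions (F1), (F2): these are exactly the instances of monotonicity that the
usual proof of the adjunction from unit and counit uses.
-/

section Adjunction

variable {α : Type*} [Preorder α] {mul imp : α → α → α}

theorem adjoint_iff_monotone (unit : ∀ x y, x ≤ imp y (mul x y))
    (counit : ∀ y z, mul (imp y z) y ≤ z) :
    (∀ x y z, mul x y ≤ z ↔ x ≤ imp y z) ↔
      (∀ x y z, x ≤ y → imp z x ≤ imp z y) ∧ (∀ x y z, x ≤ y → mul x z ≤ mul y z) := by
  constructor
  · intro adj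
    have gc (y : α) : GaloisConnection (mul · y) (imp y) := fun x z => adj x y z
    exact ⟨fun x y z => (gc z).monotone_u (a := x) (b := y),
      fun x y z => (gc z).monotone_l (a := x) (b := y)⟩
  · rintro ⟨imp_mono, mul_mono⟩ x y z
    exact GaloisConnection.monotone_intro (l := (mul · y)) (u := imp y)
      (fun _ _ => imp_mono _ _ y) (fun _ _ => mul_mono _ _ y) (unit · y) (counit y) x z

theorem adjoint_of_monotone_on_unit_counit (unit : ∀ x y, x ≤ imp y (mul x y))
    (counit : ∀ y z, mul (imp y z) y ≤ z)
    (imp_mono : ∀ x y z, mul x y ≤ z → imp y (mul x y) ≤ imp y z)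
    (mul_mono : ∀ x y z, x ≤ imp y z → mul x y ≤ mul (imp y z) y) :
    ∀ x y z, mul x y ≤ z ↔ x ≤ imp y z := fun x y z =>
  ⟨fun h => (unit x y).trans (imp_mono x y z h),
    fun h => (mul_mono x y z h).trans (counit y z)⟩

theorem monotone_iff_monotone_on_unit_counit (unit : ∀ x y, x ≤ imp y (mul x y))
    (counit : ∀ y z, mul (imp y z) y ≤ z) :
    ((∀ x y z, x ≤ y → imp z x ≤ imp z y) ∧ (∀ x y z, x ≤ y → mul x z ≤ mul y z)) ↔
      ((∀ x y z, mul x y ≤ z → imp y (mul x y) ≤ imp y z) ∧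
        (∀ x y z, x ≤ imp y z → mul x y ≤ mul (imp y z) y)) := by
  constructor
  · rintro ⟨imp_mono, mul_mono⟩
    exact ⟨fun x y z => imp_mono _ z y, fun x y z => mul_mono x _ y⟩
  · rintro ⟨imp_mono, mul_mono⟩
    exact (adjoint_iff_monotone unit counit).mp
      (adjoint_of_monotone_on_unit_counit unit counit imp_mono mul_mono)

end Adjunction

namespace LambdaLattice

variable {A : Type*} (L : LambdaLattice A)

theorem sup_idem (x : A) : L.sup x x = x := by
  have h := L.absorb_sup x (L.sup x x)
  rwa [L.absorb_inf] at h

theorem le_refl (x : A) : L.le x x := L.sup_idem x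

theorem le_trans {x y z : A} (hxy : L.le x y) (hyz : L.le y z) : L.le x z :=
  calc L.sup x z = L.sup x (L.sup (L.sup x y) z) := by rw [hxy, hyz]
    _ = L.sup (L.sup x y) z := L.sup_assoc x y z
    _ = z := by rw [hxy, hyz]

abbrev toPreorder : Preorder A where
  le := L.le
  le_refl := L.le_refl
  le_trans _ _ _ := L.le_trans

theorem le_sup_left (x y : A) : L.le x (L.sup x y) := by
  have h := L.sup_assoc x x y
  rwa [L.sup_idem] at h

theorem inf_le_left (x y : A) : L.le (L.inf x y) x := by
  rw [LambdaLattice.le, L.sup_comm]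
  exact L.absorb_sup x y

theorem inf_le_right (x y : A) : L.le (L.inf x y) y := by
  rw [L.inf_comm]
  exact L.inf_le_left y x

theorem inf_eq_right_of_le {x y : A} (h : L.le y x) : L.inf x y = y := by
  rw [L.inf_comm, ← h, L.absorb_inf]

theorem sup_eq_left_of_le {x y : A} (h : L.le y x) : L.sup x y = x := by
  rw [L.sup_comm]
  exact h

variable (c : A → A)

def sasakiMul (x y : A) : A := L.inf (L.sup x (c y)) y

def sasakiImp (x y : A) : A := L.sup (c x) (L.inf x y)

theorem le_sasakiImp_sasakiMul
    (D1 : ∀ x y : A, L.le (L.sup x (c y)) (L.sup (c y) (L.inf (L.sup x (c y)) y)))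
    (x y : A) : L.le x (L.sasakiImp c y (L.sasakiMul c x y)) := by
  rw [sasakiImp, sasakiMul, L.inf_eq_right_of_le (L.inf_le_right _ _)]
  exact L.le_trans (L.le_sup_left x (c y)) (D1 x y)

theorem sasakiMul_sasakiImp_le
    (D2 : ∀ x y : A, L.le (L.inf (L.sup (c x) (L.inf x y)) x) (L.inf x y))
    (y z : A) : L.le (L.sasakiMul c (L.sasakiImp c y z) y) z := by
  rw [sasakiMul, sasakiImp, L.sup_eq_left_of_le (L.le_sup_left _ _)]
  exact L.le_trans (D2 y z) (L.inf_le_right y z)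

end LambdaLattice

/-- In a λ-lattice with a unary operation `c` satisfying conditions
(D1) and (D2), the following are equivalent: (i) the Sasaki operations form an
adjoint pair with respect to the induced order; (ii) conditions (E1) and (E2)
hold; (iii) conditions (F1) and (F2) hold. -/
theorem sasaki_stmt_16 {A : Type*} (L : LambdaLattice A) (c : A → A)
    (D1 : ∀ x y : A, L.le (L.sup x (c y)) (L.sup (c y) (L.inf (L.sup x (c y)) y)))
    (D2 : ∀ x y : A, L.le (L.inf (L.sup (c x) (L.inf x y)) x) (L.inf x y)) :
    ((∀ x y z : A, L.le (L.inf (L.sup x (c y)) y) z ↔ L.le x (L.sup (c y) (L.inf y z))) ↔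
      ((∀ x y z : A, L.le x y → L.le (L.sup (c z) (L.inf z x)) (L.sup (c z) (L.inf z y))) ∧
       (∀ x y z : A, L.le x y → L.le (L.inf (L.sup x (c z)) z) (L.inf (L.sup y (c z)) z)))) ∧
    (((∀ x y z : A, L.le x y → L.le (L.sup (c z) (L.inf z x)) (L.sup (c z) (L.inf z y))) ∧
      (∀ x y z : A, L.le x y → L.le (L.inf (L.sup x (c z)) z) (L.inf (L.sup y (c z)) z))) ↔
      ((∀ x y z : A, L.le (L.inf (L.sup x (c y)) y) z →
        L.le (L.sup (c y) (L.inf y (L.inf (L.sup x (c y)) y))) (L.sup (c y) (L.inf y z))) ∧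
       (∀ x y z : A, L.le x (L.sup (c y) (L.inf y z)) →
        L.le (L.inf (L.sup x (c y)) y) (L.inf (L.sup (L.sup (c y) (L.inf y z)) (c y)) y)))) := by
  let _ : Preorder A := L.toPreorder
  have unit := L.le_sasakiImp_sasakiMul c D1
  have counit := L.sasakiMul_sasakiImp_le c D2
  exact ⟨adjoint_iff_monotone unit counit, monotone_iff_monotone_on_unit_counit unit counit⟩
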